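/- arXiv:1601.06453 — 2 statements merged into one kernel-verified Lean document; each statement's English description precedes it below -/
import Mathlib

section
/- Let q ∈ (0,1/2) and α ∈ (0,1/2). The entropy rate of the hidden Markov process {Y_n} obtained by passing the stationary symmetric binary Markov process with transition probability q through a binary symmetric channel with crossover probability α satisfies H̄(Y) ≥ h(α*q) = h(α(1-q) + q(1-α)). -/
open Real Filter MeasureTheory

/-- Binary entropy function (base-2 logarithm), with `binEnt 0 = binEnt 1 = 0`. -/
noncomputable def binEnt (p : ℝ) : ℝ :=
  -p * Real.logb 2 p - (1 - p) * Real.logb 2 (1 - p)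

/-- Inverse of the binary entropy function, mapping `[0,1]` onto `[0,1/2]`. -/
noncomputable def binEntInv (y : ℝ) : ℝ :=
  sInf {p : ℝ | p ∈ Set.Icc (0:ℝ) (1/2) ∧ y ≤ binEnt p}

/-- Binary convolution `a*b := a(1-b) + b(1-a)`. -/
def bConv (a b : ℝ) : ℝ := a * (1 - b) + b * (1 - a)

/-- Shannon entropy (in bits) of a distribution on a finite type. -/
noncomputable def entropyDist {β : Type*} [Fintype β] (p : β → ℝ) : ℝ :=
  ∑ b, -(p b * Real.logb 2 (p b))

/-- Probability of the path `x` under the stationary symmetric binary Markov process with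
transition probability `q`: the first coordinate is uniform (`Bernoulli(1/2)`) and each
subsequent coordinate flips the previous one with probability `q`. -/
noncomputable def symPathProb (q : ℝ) (n : ℕ) (x : Fin n → Bool) : ℝ :=
  ∏ i : Fin n,
    if (i : ℕ) = 0 then (1/2 : ℝ)
    else if x ⟨(i : ℕ) - 1, Nat.lt_of_le_of_lt (Nat.sub_le _ _) i.isLt⟩ = x i then 1 - q else q

/-- Output distribution of a memoryless binary symmetric channel with crossover probability `a`
applied to an input with distribution `p` (each coordinate flipped independently w.p. `a`). -/
noncomputable def bscOutput {n : ℕ} (a : ℝ) (p : (Fin n → Bool) → ℝ) : (Fin n → Bool) → ℝ :=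
  fun y => ∑ x : Fin n → Bool, p x * ∏ i, (if y i = x i then 1 - a else a)

/-- Distribution of the projection onto the coordinates in `s` of a vector with distribution `p`. -/
noncomputable def projDist {n : ℕ} (p : (Fin n → Bool) → ℝ) (s : Finset (Fin n)) :
    ({ i // i ∈ s } → Bool) → ℝ :=
  fun y => ∑ x : Fin n → Bool, if (∀ i : { i // i ∈ s }, x i.val = y i) then p x else 0

/-- `H(X_S | S) = ∑_{s ⊆ [n]} P(S = s) H(X_s)`, where the random subset `S` contains each
element of `[n]` independently with probability `lam`. -/
noncomputable def condEntProj {n : ℕ} (lam : ℝ) (p : (Fin n → Bool) → ℝ) : ℝ :=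
  ∑ s : Finset (Fin n), lam ^ s.card * (1 - lam) ^ (n - s.card) * entropyDist (projDist p s)

/-- Transition kernel of a binary Markov chain: `P(b | a)` with off-diagonal entries
`q01 = P(1|0)` and `q10 = P(0|1)`. -/
def markovTrans (q01 q10 : ℝ) (a b : Bool) : ℝ :=
  if a then (if b then 1 - q10 else q10) else (if b then q01 else 1 - q01)

/-- Probability of the path `x` under the binary Markov chain with initial distribution
`(p0, p1)` and transition probabilities `q01, q10`. -/
noncomputable def markovPathProb (p0 p1 q01 q10 : ℝ) (n : ℕ) (x : Fin n → Bool) : ℝ :=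
  ∏ i : Fin n,
    if (i : ℕ) = 0 then (if x i then p1 else p0)
    else markovTrans q01 q10 (x ⟨(i : ℕ) - 1, Nat.lt_of_le_of_lt (Nat.sub_le _ _) i.isLt⟩) (x i)

/-! Given the hidden past `X₁, …, Xₙ`, the next output `Yₙ₊₁` is `1` with probability `1/2`,
`α*q` or `1 - α*q`; its conditional probability given the past outputs `Y₁, …, Yₙ` is an average
of these, hence lies in `[α*q, 1 - α*q]`. By the grouping property of entropy, every new output
therefore adds between `h(α*q)` and `1` to `H(Y₁, …, Yₙ)`, so `n h(α*q) ≤ H(Y₁, …, Yₙ) ≤ n`. -/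

section Entropy

lemma binEnt_eq_binEntropy_div (p : ℝ) : binEnt p = binEntropy p / log 2 := by
  unfold binEnt binEntropy logb
  rw [log_inv, log_inv]
  ring

lemma binEnt_le_one (p : ℝ) : binEnt p ≤ 1 := by
  rw [binEnt_eq_binEntropy_div, div_le_one (log_pos one_lt_two)]
  exact binEntropy_le_log_two

lemma binEnt_le_binEnt {s r : ℝ} (hs : 0 ≤ s) (hsr : s ≤ r) (hr : r ≤ 1 - s) :
    binEnt s ≤ binEnt r := by
  rw [binEnt_eq_binEntropy_div, binEnt_eq_binEntropy_div]
  gcongr ?_ / _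
  rcases le_or_gt r 2⁻¹ with hr2 | hr2
  · exact binEntropy_strictMonoOn.monotoneOn ⟨hs, by linarith⟩ ⟨by linarith, hr2⟩ hsr
  · rw [← binEntropy_one_sub r]
    exact binEntropy_strictMonoOn.monotoneOn ⟨hs, by linarith⟩ ⟨by linarith, by linarith⟩
      (by linarith)

lemma entropyDist_eq_sum_negMulLog {β : Type*} [Fintype β] (p : β → ℝ) :
    entropyDist p = (∑ b, negMulLog (p b)) / log 2 := by
  simp only [entropyDist, Finset.sum_div, negMulLog, logb]
  congr! 1 with b
  ring

lemma negMulLog_add_negMulLog (u v : ℝ) :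
    negMulLog u + negMulLog v = negMulLog (u + v) + (u + v) * binEntropy (u / (u + v)) := by
  rcases eq_or_ne (u + v) 0 with h | h
  · obtain rfl : v = -u := by linarith
    simp [negMulLog, log_neg_eq_log]
  · set r := u / (u + v)
    have hu : (u + v) * r = u := mul_div_cancel₀ u h
    have hv : (u + v) * (1 - r) = v := by rw [mul_one_sub, hu]; ring
    calc negMulLog u + negMulLog v = negMulLog ((u + v) * r) + negMulLog ((u + v) * (1 - r)) := by
          rw [hu, hv]
      _ = negMulLog (u + v) + (u + v) * binEntropy r := by
          rw [negMulLog_mul, negMulLog_mul, binEntropy_eq_negMulLog_add_negMulLog_one_sub]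
          ring

end Entropy

section ChainRule

variable {n : ℕ}

lemma Fin.sum_univ_pi_snoc {β M : Type*} [Fintype β] [AddCommMonoid M]
    (f : (Fin (n + 1) → β) → M) : ∑ x, f x = ∑ y : Fin n → β, ∑ c, f (Fin.snoc y c) := by
  rw [← (Fin.snocEquiv fun _ => β).sum_comp, Fintype.sum_prod_type, Finset.sum_comm]
  rfl

def initMarginal {β : Type*} [Fintype β] (P : (Fin (n + 1) → β) → ℝ) (y : Fin n → β) : ℝ :=
  ∑ c, P (Fin.snoc y c)

lemma sum_initMarginal {β : Type*} [Fintype β] (P : (Fin (n + 1) → β) → ℝ) :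
    ∑ y, initMarginal P y = ∑ x, P x :=
  (Fin.sum_univ_pi_snoc P).symm

lemma entropyDist_eq_initMarginal_add (P : (Fin (n + 1) → Bool) → ℝ) :
    entropyDist P = entropyDist (initMarginal P) +
      ∑ y, initMarginal P y * binEnt (P (Fin.snoc y true) / initMarginal P y) := by
  simp only [entropyDist_eq_sum_negMulLog, binEnt_eq_binEntropy_div, initMarginal]
  rw [Fin.sum_univ_pi_snoc fun x => negMulLog (P x)]
  simp only [Fintype.sum_bool, negMulLog_add_negMulLog, Finset.sum_add_distrib, add_div,
    Finset.sum_div, mul_div_assoc]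

variable {P : (Fin (n + 1) → Bool) → ℝ}

lemma add_binEnt_mul_le_entropyDist {s : ℝ} (hs : 0 ≤ s) (hP : 0 ≤ P)
    (hPs : ∀ y c, s * initMarginal P y ≤ P (Fin.snoc y c)) :
    entropyDist (initMarginal P) + binEnt s * ∑ y, initMarginal P y ≤ entropyDist P := by
  rw [entropyDist_eq_initMarginal_add, Finset.mul_sum]
  refine add_le_add le_rfl (Finset.sum_le_sum fun y _ => ?_)
  have hM : initMarginal P y = P (Fin.snoc y true) + P (Fin.snoc y false) := Fintype.sum_bool _
  rcases (add_nonneg (hP (Fin.snoc y true)) (hP (Fin.snoc y false))).eq_or_lt with h0 | hpos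
  · simp [hM, ← h0]
  rw [← hM] at hpos
  rw [mul_comm]
  refine mul_le_mul_of_nonneg_left (binEnt_le_binEnt hs ?_ ?_) hpos.le
  · rw [le_div_iff₀ hpos]
    exact hPs y true
  · rw [div_le_iff₀ hpos]
    linarith [hPs y false]

lemma entropyDist_le_add_sum_initMarginal (hP : 0 ≤ P) :
    entropyDist P ≤ entropyDist (initMarginal P) + ∑ y, initMarginal P y := by
  rw [entropyDist_eq_initMarginal_add]
  gcongr with y
  exact mul_le_of_le_one_right (Finset.sum_nonneg fun c _ => hP _) (binEnt_le_one _)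

end ChainRule

section HiddenMarkov

variable {a q : ℝ} {n : ℕ}

noncomputable def symNextProb (q : ℝ) : {n : ℕ} → (Fin n → Bool) → Bool → ℝ
  | 0, _, _ => 1 / 2
  | m + 1, x, b => if x (Fin.last m) = b then 1 - q else q

lemma Fin.snoc_mk_of_lt {α : Type*} (x : Fin n → α) (b : α) {k : ℕ} (hk : k < n)
    (h : k < n + 1) : (Fin.snoc x b : Fin (n + 1) → α) ⟨k, h⟩ = x ⟨k, hk⟩ := by
  simp [Fin.snoc, hk]

lemma symPathProb_snoc (x : Fin n → Bool) (b : Bool) :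
    symPathProb q (n + 1) (Fin.snoc x b) = symPathProb q n x * symNextProb q x b := by
  unfold symPathProb
  rw [Fin.prod_univ_castSucc]
  congr 1
  · refine Finset.prod_congr rfl fun i _ => ?_
    simp only [Fin.val_castSucc, Fin.snoc_castSucc,
      Fin.snoc_mk_of_lt x b (i.2.trans_le' (Nat.sub_le _ _))]
  · cases n with
    | zero => simp [symNextProb]
    | succ m =>
      rw [Fin.snoc_last]
      simp [symNextProb, Fin.snoc_mk_of_lt x b (Nat.lt_succ_self m), Fin.last]

/-- `P(Yₙ₊₁ = c | X₁ … Xₙ = x)`. -/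
noncomputable def nextOutputProb (a q : ℝ) (x : Fin n → Bool) (c : Bool) : ℝ :=
  ∑ b, symNextProb q x b * (if c = b then 1 - a else a)

lemma nextOutputProb_zero (x : Fin 0 → Bool) (c : Bool) : nextOutputProb a q x c = 1 / 2 := by
  unfold nextOutputProb symNextProb
  rw [Fintype.sum_bool]
  cases c <;> simp only [Bool.true_eq_false, Bool.false_eq_true, ↓reduceIte] <;> ring

lemma nextOutputProb_succ {m : ℕ} (x : Fin (m + 1) → Bool) (c : Bool) :
    nextOutputProb a q x c = if x (Fin.last m) = c then 1 - bConv a q else bConv a q := by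
  unfold nextOutputProb symNextProb bConv
  rw [Fintype.sum_bool]
  cases h : x (Fin.last m) <;> cases c <;>
    simp only [h, Bool.true_eq_false, Bool.false_eq_true, ↓reduceIte] <;> ring

lemma sum_nextOutputProb (x : Fin n → Bool) : ∑ c, nextOutputProb a q x c = 1 := by
  rw [Fintype.sum_bool]
  cases n with
  | zero => rw [nextOutputProb_zero, nextOutputProb_zero]; norm_num
  | succ m => rw [nextOutputProb_succ, nextOutputProb_succ]; cases x (Fin.last m) <;> simp

lemma bConv_le_nextOutputProb (ha : a ∈ Set.Icc 0 (1 / 2)) (hq : q ∈ Set.Icc 0 (1 / 2))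
    (x : Fin n → Bool) (c : Bool) : bConv a q ≤ nextOutputProb a q x c := by
  have h : bConv a q ≤ 1 / 2 := by
    unfold bConv
    nlinarith [ha.1, ha.2, hq.1, hq.2]
  cases n with
  | zero => rw [nextOutputProb_zero]; exact h
  | succ m => rw [nextOutputProb_succ]; split_ifs <;> linarith

lemma bscOutput_snoc (y : Fin n → Bool) (c : Bool) :
    bscOutput a (symPathProb q (n + 1)) (Fin.snoc y c) =
      ∑ x, symPathProb q n x * (∏ i, if y i = x i then 1 - a else a) * nextOutputProb a q x c := by
  rw [bscOutput, Fin.sum_univ_pi_snoc]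
  refine Finset.sum_congr rfl fun x _ => ?_
  rw [nextOutputProb, Finset.mul_sum]
  refine Finset.sum_congr rfl fun b _ => ?_
  rw [symPathProb_snoc, Fin.prod_univ_castSucc]
  simp only [Fin.snoc_castSucc, Fin.snoc_last]
  ring

lemma initMarginal_bscOutput_symPathProb :
    initMarginal (bscOutput a (symPathProb q (n + 1))) = bscOutput a (symPathProb q n) := by
  funext y
  simp only [initMarginal, bscOutput_snoc]
  rw [Finset.sum_comm]
  simp only [← Finset.mul_sum, sum_nextOutputProb, mul_one]
  rfl

lemma sum_bscOutput_symPathProb : ∑ y, bscOutput a (symPathProb q n) y = 1 := by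
  induction n with
  | zero => simp [bscOutput, symPathProb]
  | succ n ih => rw [← sum_initMarginal, initMarginal_bscOutput_symPathProb, ih]

lemma entropyDist_bscOutput_symPathProb_zero : entropyDist (bscOutput a (symPathProb q 0)) = 0 := by
  simp [entropyDist, bscOutput, symPathProb]

lemma symPathProb_nonneg (hq : q ∈ Set.Icc 0 1) : 0 ≤ symPathProb q n := fun x => by
  obtain ⟨hq0, hq1⟩ := hq
  refine Finset.prod_nonneg fun i _ => ?_
  split_ifs <;> linarith

lemma prod_bsc_nonneg (ha : a ∈ Set.Icc 0 1) (y x : Fin n → Bool) :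
    0 ≤ ∏ i, if y i = x i then 1 - a else a :=
  Finset.prod_nonneg fun i _ => by split_ifs <;> linarith [ha.1, ha.2]

lemma bscOutput_nonneg {p : (Fin n → Bool) → ℝ} (ha : a ∈ Set.Icc 0 1) (hp : 0 ≤ p) :
    0 ≤ bscOutput a p := fun y =>
  Finset.sum_nonneg fun x _ => mul_nonneg (hp x) (prod_bsc_nonneg ha y x)

lemma bConv_mul_initMarginal_le (ha : a ∈ Set.Icc 0 (1 / 2)) (hq : q ∈ Set.Icc 0 (1 / 2))
    (y : Fin n → Bool) (c : Bool) :
    bConv a q * initMarginal (bscOutput a (symPathProb q (n + 1))) y ≤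
      bscOutput a (symPathProb q (n + 1)) (Fin.snoc y c) := by
  rw [initMarginal_bscOutput_symPathProb, bscOutput_snoc, bscOutput, Finset.mul_sum]
  refine Finset.sum_le_sum fun x _ => ?_
  rw [mul_comm]
  refine mul_le_mul_of_nonneg_left (bConv_le_nextOutputProb ha hq x c) (mul_nonneg ?_ ?_)
  · exact symPathProb_nonneg (Set.Icc_subset_Icc_right one_half_lt_one.le hq) x
  · exact prod_bsc_nonneg (Set.Icc_subset_Icc_right one_half_lt_one.le ha) y x

lemma entropyDist_bscOutput_symPathProb_le (ha : a ∈ Set.Icc 0 1) (hq : q ∈ Set.Icc 0 1) (n : ℕ) :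
    entropyDist (bscOutput a (symPathProb q n)) ≤ n := by
  induction n with
  | zero => simp [entropyDist_bscOutput_symPathProb_zero]
  | succ n ih =>
    calc entropyDist (bscOutput a (symPathProb q (n + 1)))
        ≤ entropyDist (bscOutput a (symPathProb q n)) + 1 := by
          simpa [initMarginal_bscOutput_symPathProb, sum_bscOutput_symPathProb] using
            entropyDist_le_add_sum_initMarginal (bscOutput_nonneg ha (symPathProb_nonneg hq))
      _ ≤ (n + 1 : ℕ) := by push_cast; linarith

lemma mul_binEnt_le_entropyDist_bscOutput_symPathProb (ha : a ∈ Set.Icc 0 (1 / 2))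
    (hq : q ∈ Set.Icc 0 (1 / 2)) (n : ℕ) :
    n * binEnt (bConv a q) ≤ entropyDist (bscOutput a (symPathProb q n)) := by
  have hs : 0 ≤ bConv a q := by
    unfold bConv
    nlinarith [ha.1, ha.2, hq.1, hq.2]
  induction n with
  | zero => simp [entropyDist_bscOutput_symPathProb_zero]
  | succ n ih =>
    calc ((n + 1 : ℕ) : ℝ) * binEnt (bConv a q)
        ≤ entropyDist (bscOutput a (symPathProb q n)) + binEnt (bConv a q) := by push_cast; linarith
      _ ≤ entropyDist (bscOutput a (symPathProb q (n + 1))) := by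
          simpa [initMarginal_bscOutput_symPathProb, sum_bscOutput_symPathProb] using
            add_binEnt_mul_le_entropyDist hs
              (bscOutput_nonneg (Set.Icc_subset_Icc_right one_half_lt_one.le ha)
                (symPathProb_nonneg (Set.Icc_subset_Icc_right one_half_lt_one.le hq)))
              (bConv_mul_initMarginal_le ha hq)

end HiddenMarkov

lemma le_liminf_div_natCast {f : ℕ → ℝ} {c C : ℝ} (hlow : ∀ n : ℕ, n * c ≤ f n)
    (hup : ∀ n : ℕ, f n ≤ n * C) : c ≤ atTop.liminf fun n => f n / n := by
  refine le_liminf_of_le ?_ ?_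
  · refine isBoundedUnder_of_eventually_le (a := C) ?_ |>.isCoboundedUnder_ge
    filter_upwards [eventually_gt_atTop 0] with n hn
    rw [div_le_iff₀ (Nat.cast_pos.mpr hn)]
    linarith [hup n]
  · filter_upwards [eventually_gt_atTop 0] with n hn
    rw [le_div_iff₀ (Nat.cast_pos.mpr hn)]
    linarith [hlow n]

/-- Mrs. Gerber's Lemma bound. For `q, α ∈ (0,1/2)`, the entropy rate
(taken as `liminf`) of the symmetric binary hidden Markov process satisfies
`H̄(Y) ≥ h(α*q) = h(α(1-q) + q(1-α))`. -/
theorem mgl_entropy_rate_lower_bound (q a : ℝ)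
    (hq : q ∈ Set.Ioo (0:ℝ) (1/2)) (ha : a ∈ Set.Ioo (0:ℝ) (1/2)) :
    binEnt (bConv a q) ≤
      Filter.atTop.liminf (fun n : ℕ => entropyDist (bscOutput a (symPathProb q n)) / n) := by
  have ha' : a ∈ Set.Icc (0 : ℝ) (1 / 2) := Set.Ioo_subset_Icc_self ha
  have hq' : q ∈ Set.Icc (0 : ℝ) (1 / 2) := Set.Ioo_subset_Icc_self hq
  refine le_liminf_div_natCast (C := 1)
    (mul_binEnt_le_entropyDist_bscOutput_symPathProb ha' hq') fun n => ?_
  rw [mul_one]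
  exact entropyDist_bscOutput_symPathProb_le (Set.Icc_subset_Icc_right one_half_lt_one.le ha')
    (Set.Icc_subset_Icc_right one_half_lt_one.le hq') n
end

section
/- Fix q ∈ (0,1/2). For ε ∈ (0,1/2) set λ = 4ε² (equivalently λ = (1-2α)² with α = 1/2 - ε), let G_ε be a geometric random variable with parameter λ, and let β(ε) := E[h((1-(1-2q)^{G_ε})/2)]. Then β(ε) = 1 - 4ε²·Σ_{k=1}^∞ (log₂e)/(2k(2k-1)) · (1-2q)^{2k}/(1-(1-2q)^{2k}) + O(ε⁴) as ε → 0; that is, there exist C > 0 and ε₀ > 0 such that for all 0 < ε < ε₀, |β(ε) - 1 + 4ε²·Σ_{k=1}^∞ (log₂e)/(2k(2k-1))·(1-2q)^{2k}/(1-(1-2q)^{2k})| ≤ C·ε⁴. -/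
open Real Filter MeasureTheory

/-!
Expanding `1 - h((1 - x)/2) = ∑_{k ≥ 1} log₂e/(2k(2k-1)) · x^{2k}` at `x = (1-2q)^G` and summing
over `G` first (Tonelli, all terms are nonnegative) turns each `x^{2k}` into the generating
function `λu/(1 - (1-λ)u)` of the geometric law at `u = (1-2q)^{2k}`. Its first order term is
`λu/(1-u)`, and the remainder `λ²u²/((1-u)(1-(1-λ)u))` is `O(λ²) = O(ε⁴)` uniformly in `k`, with
`∑_k log₂e/(2k(2k-1)) · u²` again a value of the entropy series.
-/

-- The paper's coefficient `log₂e/(2k(2k-1))`, indexed from `k = 0` instead of `k = 1`.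
noncomputable def binEntCoeff (k : ℕ) : ℝ :=
  Real.logb 2 (Real.exp 1) / (2 * ((k : ℝ) + 1) * (2 * ((k : ℝ) + 1) - 1))

lemma binEntCoeff_pos (k : ℕ) : 0 < binEntCoeff k := by
  have hk : (0 : ℝ) ≤ k := k.cast_nonneg
  exact div_pos (Real.logb_pos one_lt_two (Real.one_lt_exp_iff.2 one_pos)) (by nlinarith)

lemma hasSum_mul_log_one_sub_add_mul_log_one_add {x : ℝ} (hx : |x| < 1) :
    HasSum (fun k : ℕ => x ^ (2 * (k + 1)) / ((2 * k + 1) * (2 * k + 2)))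
      ((1 - x) / 2 * Real.log (1 - x) + (1 + x) / 2 * Real.log (1 + x)) := by
  obtain ⟨hx₁, hx₂⟩ := abs_lt.1 hx
  have hsq : |x ^ 2| < 1 := by
    rw [abs_pow]
    exact pow_lt_one₀ (abs_nonneg x) hx two_ne_zero
  have hlog : Real.log (1 - x ^ 2) = Real.log (1 - x) + Real.log (1 + x) := by
    rw [← Real.log_mul (by linarith) (by linarith)]
    ring_nf
  have h := (((hasSum_log_sub_log_of_abs_lt_one hx).mul_left x).sub
    (hasSum_pow_div_log_of_abs_lt_one hsq)).div_const 2
  -- `log(1-x²)` supplies the even powers and `x·(log(1+x) - log(1-x))` the odd ones.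
  rw [show (1 - x) / 2 * Real.log (1 - x) + (1 + x) / 2 * Real.log (1 + x)
      = (x * (Real.log (1 + x) - Real.log (1 - x)) - -Real.log (1 - x ^ 2)) / 2 by
    rw [hlog]; ring]
  refine h.congr_fun fun k => ?_
  have h₁ : (2 * k + 1 : ℝ) ≠ 0 := by positivity
  have h₂ : (k + 1 : ℝ) ≠ 0 := by positivity
  field_simp
  ring

lemma hasSum_one_sub_binEnt {x : ℝ} (hx : |x| < 1) :
    HasSum (fun k => binEntCoeff k * x ^ (2 * (k + 1))) (1 - binEnt ((1 - x) / 2)) := by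
  obtain ⟨hx₁, hx₂⟩ := abs_lt.1 hx
  have hlog2 : Real.log 2 ≠ 0 := (Real.log_pos one_lt_two).ne'
  have hterm (k : ℕ) : binEntCoeff k * x ^ (2 * (k + 1))
      = x ^ (2 * (k + 1)) / ((2 * k + 1) * (2 * k + 2)) / Real.log 2 := by
    have hden : 2 * ((k : ℝ) + 1) * (2 * ((k : ℝ) + 1) - 1) = (2 * k + 1) * (2 * k + 2) := by
      ring
    have h₁ : (2 * k + 1 : ℝ) ≠ 0 := by positivity
    have h₂ : (2 * k + 2 : ℝ) ≠ 0 := by positivity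
    simp only [binEntCoeff, Real.logb, Real.log_exp, hden]
    field_simp
  have hsum : 1 - binEnt ((1 - x) / 2)
      = ((1 - x) / 2 * Real.log (1 - x) + (1 + x) / 2 * Real.log (1 + x)) / Real.log 2 := by
    rw [binEnt, show 1 - (1 - x) / 2 = (1 + x) / 2 by ring, Real.logb, Real.logb,
      Real.log_div (by linarith) two_ne_zero, Real.log_div (by linarith) two_ne_zero]
    field_simp
    ring
  simpa only [hterm, hsum] using (hasSum_mul_log_one_sub_add_mul_log_one_add hx).div_const (Real.log 2)

lemma hasSum_geometric_pgf {l y : ℝ} (hy : |(1 - l) * y| < 1) :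
    HasSum (fun g : ℕ => (1 - l) ^ g * l * y ^ (g + 1)) (l * y / (1 - (1 - l) * y)) := by
  rw [div_eq_mul_inv]
  refine ((hasSum_geometric_of_abs_lt_one hy).mul_left (l * y)).congr_fun fun g => ?_
  rw [mul_pow]
  ring

lemma hasSum_rowSums_of_hasSum_colSums {β γ : Type*} {F : β × γ → ℝ} (hF : 0 ≤ F)
    {r : β → ℝ} {c : γ → ℝ} {s : ℝ} (hr : ∀ b, HasSum (fun k => F (b, k)) (r b))
    (hc : ∀ k, HasSum (fun b => F (b, k)) (c k)) (hs : HasSum c s) : HasSum r s := by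
  have hswap : Summable (F ∘ Prod.swap) := by
    refine (summable_prod_of_nonneg fun p => hF p.swap).2 ⟨fun k => (hc k).summable, ?_⟩
    exact hs.summable.congr fun k => ((hc k).tsum_eq).symm
  have hswap' : HasSum (F ∘ Prod.swap) s := by
    rw [← (hswap.hasSum.prod_fiberwise hc).unique hs]
    exact hswap.hasSum
  exact (((Equiv.prodComm γ β).hasSum_iff (f := F)).mp hswap').prod_fiberwise hr

lemma geometric_pgf_gap_mem_Icc {l u s : ℝ} (hl₀ : 0 ≤ l) (hu₀ : 0 ≤ u)
    (hus : u ≤ s) (hs : s < 1) :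
    l * (u / (1 - u)) - l * u / (1 - (1 - l) * u) ∈ Set.Icc 0 (l ^ 2 * u ^ 2 / (1 - s) ^ 2) := by
  have h₁ : 0 < 1 - u := by linarith
  have h₂ : 1 - u ≤ 1 - (1 - l) * u := by nlinarith
  have h₃ : 0 < 1 - (1 - l) * u := by linarith
  have hden : 0 < (1 - u) * (1 - (1 - l) * u) := mul_pos h₁ h₃
  have hgap : l * (u / (1 - u)) - l * u / (1 - (1 - l) * u)
      = l ^ 2 * u ^ 2 / ((1 - u) * (1 - (1 - l) * u)) := by
    rw [mul_div_assoc', div_sub_div _ _ h₁.ne' h₃.ne']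
    ring
  rw [hgap]
  refine ⟨by positivity, div_le_div_of_nonneg_left (by positivity) (by nlinarith) ?_⟩
  rw [sq]
  exact mul_le_mul (by linarith) (by linarith) (by linarith) h₁.le

section
variable {l t : ℝ}

lemma summable_binEntCoeff_mul_pow_div (ht₀ : 0 ≤ t) (ht₁ : t < 1) :
    Summable (fun k => binEntCoeff k * (t ^ (2 * (k + 1)) / (1 - t ^ (2 * (k + 1))))) := by
  have ht2 : t ^ 2 < 1 := pow_lt_one₀ ht₀ ht₁ two_ne_zero
  refine Summable.of_nonneg_of_le (fun k => ?_) (fun k => ?_)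
    ((hasSum_one_sub_binEnt (abs_lt.2 ⟨by linarith, ht₁⟩)).summable.div_const (1 - t ^ 2))
  all_goals
    have hu : t ^ (2 * (k + 1)) ≤ t ^ 2 := pow_le_pow_of_le_one ht₀ ht₁.le (by omega)
    have hu₀ : 0 ≤ t ^ (2 * (k + 1)) := pow_nonneg ht₀ _
    have hc := (binEntCoeff_pos k).le
  · exact mul_nonneg hc (div_nonneg hu₀ (by linarith))
  · rw [mul_div_assoc]
    gcongr

lemma summable_binEntCoeff_mul_geometric_pgf (hl₀ : 0 ≤ l) (hl₁ : l ≤ 1) (ht₀ : 0 ≤ t)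
    (ht₁ : t < 1) : Summable (fun k => binEntCoeff k *
      (l * t ^ (2 * (k + 1)) / (1 - (1 - l) * t ^ (2 * (k + 1))))) := by
  refine Summable.of_nonneg_of_le (fun k => ?_) (fun k => ?_)
    (summable_binEntCoeff_mul_pow_div ht₀ ht₁)
  all_goals
    have hu₁ : t ^ (2 * (k + 1)) < 1 := pow_lt_one₀ ht₀ ht₁ (by omega)
    have hu₀ : 0 ≤ t ^ (2 * (k + 1)) := pow_nonneg ht₀ _
    have hc := (binEntCoeff_pos k).le
  · exact mul_nonneg hc (div_nonneg (mul_nonneg hl₀ hu₀) (by nlinarith))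
  · refine mul_le_mul_of_nonneg_left ?_ hc
    exact div_le_div₀ hu₀ (mul_le_of_le_one_left hu₀ hl₁) (by linarith) (by nlinarith)

lemma hasSum_beta (hl₀ : 0 < l) (hl₁ : l ≤ 1) (ht₀ : 0 ≤ t) (ht₁ : t < 1) :
    HasSum (fun g : ℕ => (1 - l) ^ g * l * binEnt ((1 - t ^ (g + 1)) / 2))
      (1 - ∑' k, binEntCoeff k *
        (l * t ^ (2 * (k + 1)) / (1 - (1 - l) * t ^ (2 * (k + 1))))) := by
  have hpgf {y : ℝ} (hy₀ : 0 ≤ y) (hy₁ : y ≤ 1) : |(1 - l) * y| < 1 := by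
    rw [abs_of_nonneg (by nlinarith)]
    nlinarith
  have hweights : HasSum (fun g : ℕ => (1 - l) ^ g * l) 1 := by
    simpa [hl₀.ne'] using hasSum_geometric_pgf (l := l) (hpgf zero_le_one le_rfl)
  have hrows : HasSum (fun g : ℕ => (1 - l) ^ g * l * (1 - binEnt ((1 - t ^ (g + 1)) / 2)))
      (∑' k, binEntCoeff k * (l * t ^ (2 * (k + 1)) / (1 - (1 - l) * t ^ (2 * (k + 1))))) := by
    refine hasSum_rowSums_of_hasSum_colSums
      (F := fun p => (1 - l) ^ p.1 * l * (binEntCoeff p.2 * (t ^ (p.1 + 1)) ^ (2 * (p.2 + 1))))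
      (fun p => ?_) (fun g => ?_) (fun k => ?_)
      (summable_binEntCoeff_mul_geometric_pgf hl₀.le hl₁ ht₀ ht₁).hasSum
    · have := (binEntCoeff_pos p.2).le
      have : 0 ≤ 1 - l := by linarith
      positivity
    · exact (hasSum_one_sub_binEnt (abs_lt.2 ⟨by linarith [pow_nonneg ht₀ (g + 1)],
        pow_lt_one₀ ht₀ ht₁ (by omega)⟩)).mul_left _
    · refine ((hasSum_geometric_pgf (hpgf (pow_nonneg ht₀ (2 * (k + 1)))
        (pow_le_one₀ ht₀ ht₁.le))).mul_left (binEntCoeff k)).congr_fun fun g => ?_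
      rw [← pow_mul, ← pow_mul, mul_comm (g + 1)]
      ring
  exact (hweights.sub hrows).congr_fun fun g => by ring

lemma abs_beta_sub_expansion_le (hl₀ : 0 < l) (hl₁ : l ≤ 1) (ht₀ : 0 ≤ t) (ht₁ : t < 1) :
    |(∑' g : ℕ, (1 - l) ^ g * l * binEnt ((1 - t ^ (g + 1)) / 2)) - 1
        + l * ∑' k, binEntCoeff k * (t ^ (2 * (k + 1)) / (1 - t ^ (2 * (k + 1))))|
      ≤ l ^ 2 / (1 - t ^ 2) ^ 2 * (1 - binEnt ((1 - t ^ 2) / 2)) := by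
  have ht2 : t ^ 2 < 1 := pow_lt_one₀ ht₀ ht₁ two_ne_zero
  have hgap (k : ℕ) := geometric_pgf_gap_mem_Icc hl₀.le (pow_nonneg ht₀ (2 * (k + 1)))
    (pow_le_pow_of_le_one ht₀ ht₁.le (by omega)) ht2
  have hremainder : HasSum (fun k => binEntCoeff k * (l * (t ^ (2 * (k + 1)) /
        (1 - t ^ (2 * (k + 1)))) - l * t ^ (2 * (k + 1)) / (1 - (1 - l) * t ^ (2 * (k + 1)))))
      ((∑' g : ℕ, (1 - l) ^ g * l * binEnt ((1 - t ^ (g + 1)) / 2)) - 1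
        + l * ∑' k, binEntCoeff k * (t ^ (2 * (k + 1)) / (1 - t ^ (2 * (k + 1))))) := by
    rw [(hasSum_beta hl₀ hl₁ ht₀ ht₁).tsum_eq, sub_sub_cancel_left, neg_add_eq_sub]
    refine (((summable_binEntCoeff_mul_pow_div ht₀ ht₁).hasSum.mul_left l).sub
      (summable_binEntCoeff_mul_geometric_pgf hl₀.le hl₁ ht₀ ht₁).hasSum).congr_fun fun k => ?_
    ring
  have hbound : HasSum (fun k => binEntCoeff k * (l ^ 2 * (t ^ (2 * (k + 1))) ^ 2 / (1 - t ^ 2) ^ 2))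
      (l ^ 2 / (1 - t ^ 2) ^ 2 * (1 - binEnt ((1 - t ^ 2) / 2))) := by
    refine ((hasSum_one_sub_binEnt (abs_lt.2 ⟨by nlinarith, ht2⟩)).mul_left
      (l ^ 2 / (1 - t ^ 2) ^ 2)).congr_fun fun k => ?_
    rw [← pow_mul, ← pow_mul, mul_comm 2 (2 * (k + 1))]
    ring
  rw [abs_of_nonneg (hremainder.nonneg fun k => mul_nonneg (binEntCoeff_pos k).le (hgap k).1)]
  exact hasSum_le (fun k => mul_le_mul_of_nonneg_left (hgap k).2 (binEntCoeff_pos k).le)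
    hremainder hbound

end

/-- For fixed `q ∈ (0,1/2)`, `λ = 4ε²` and `G_ε` geometric with parameter `λ`,
`β(ε) = E[h((1-(1-2q)^{G_ε})/2)]` satisfies
`β(ε) = 1 - 4ε²·Σ_{k≥1} (log₂e)/(2k(2k-1))·(1-2q)^{2k}/(1-(1-2q)^{2k}) + O(ε⁴)`. -/
theorem beta_very_noisy_asymptotics (q : ℝ) (hq : q ∈ Set.Ioo (0:ℝ) (1/2)) :
    ∃ C > (0:ℝ), ∃ e₀ > (0:ℝ), ∀ e : ℝ, 0 < e → e < e₀ → e < 1/2 →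
      |(∑' g : ℕ, (1 - 4*e^2)^g * (4*e^2) * binEnt ((1 - (1 - 2*q)^(g+1))/2))
        - 1 + 4*e^2 *
          ∑' k : ℕ, Real.logb 2 (Real.exp 1) / (2*((k:ℝ)+1) * (2*((k:ℝ)+1) - 1)) *
            ((1 - 2*q)^(2*(k+1)) / (1 - (1 - 2*q)^(2*(k+1))))| ≤ C * e^4 := by
  obtain ⟨hq₀, hq₁⟩ := hq
  set t := 1 - 2 * q
  have ht₀ : 0 < t := by linarith
  have ht₁ : t < 1 := by linarith
  have ht2 : t ^ 2 < 1 := pow_lt_one₀ ht₀.le ht₁ two_ne_zero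
  have hM := hasSum_one_sub_binEnt (abs_lt.2 ⟨by nlinarith, ht2⟩)
  have hMpos : 0 < 1 - binEnt ((1 - t ^ 2) / 2) :=
    hM.tsum_eq ▸ hM.summable.tsum_pos (fun k => by have := binEntCoeff_pos k; positivity) 0
      (by have := binEntCoeff_pos 0; positivity)
  refine ⟨16 * (1 - binEnt ((1 - t ^ 2) / 2)) / (1 - t ^ 2) ^ 2, by positivity, 1 / 2,
    by norm_num, fun e he₀ _ he₁ => ?_⟩
  calc _ ≤ (4 * e ^ 2) ^ 2 / (1 - t ^ 2) ^ 2 * (1 - binEnt ((1 - t ^ 2) / 2)) :=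
        abs_beta_sub_expansion_le (by positivity) (by nlinarith) ht₀.le ht₁
    _ = _ := by ring
end
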